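/- For every preference profile P and every tiebreaker τ for P, the River diagram is a directed spanning tree of A(P) oriented away from a single root: it is acyclic, every vertex has at most one incoming edge, it has exactly |A(P)| − 1 edges, and exactly one vertex has no incoming edge. Consequently the River winner set RV(P,τ) is a singleton (River is resolute). -/

import Mathlib

/-! ## Preference profiles -/

/-- A preference profile: a finite set of voters, a finite set of alternatives,
and for each voter a (Boolean-valued) preference relation, `pref i x y` meaning
voter `i` ranks `x` above `y`. -/
structure Profile (ν α : Type) where
  voters : Finset ν
  alts : Finset α
  pref : ν → α → α → Bool

namespace Profile

variable {ν α : Type}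

/-- A profile is valid if there is at least one voter, at least two alternatives,
and every voter's preference is a strict linear order on the alternatives. -/
def Valid (P : Profile ν α) : Prop :=
  P.voters.Nonempty ∧ 2 ≤ P.alts.card ∧
  (∀ i ∈ P.voters, ∀ a ∈ P.alts, ¬ P.pref i a a) ∧
  (∀ i ∈ P.voters, ∀ a ∈ P.alts, ∀ b ∈ P.alts, ∀ c ∈ P.alts,
      P.pref i a b → P.pref i b c → P.pref i a c) ∧
  (∀ i ∈ P.voters, ∀ a ∈ P.alts, ∀ b ∈ P.alts, a ≠ b → (P.pref i a b ↔ ¬ P.pref i b a))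

/-- The majority margin of `x` over `y`. -/
def margin (P : Profile ν α) (x y : α) : ℤ :=
  ((P.voters.filter (fun i => P.pref i x y)).card : ℤ) -
    ((P.voters.filter (fun i => P.pref i y x)).card : ℤ)

/-- The restriction of a profile to the alternatives other than `x`. -/
def restrict [DecidableEq α] (P : Profile ν α) (x : α) : Profile ν α :=
  ⟨P.voters, P.alts.erase x, P.pref⟩

/-- `y` Pareto-dominates `x`: every voter ranks `y` above `x`,
i.e. the margin of `y` over `x` equals the number of voters. -/
def ParetoDominates (P : Profile ν α) (y x : α) : Prop :=
  P.margin y x = P.voters.card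

/-- A profile is uniquely weighted if no margin between distinct alternatives is zero and
distinct ordered pairs of distinct alternatives have distinct margins. -/
def UniquelyWeighted (P : Profile ν α) : Prop :=
  (∀ x ∈ P.alts, ∀ y ∈ P.alts, x ≠ y → P.margin x y ≠ 0) ∧
  (∀ x ∈ P.alts, ∀ y ∈ P.alts, ∀ v ∈ P.alts, ∀ w ∈ P.alts,
      x ≠ y → v ≠ w → (x, y) ≠ (v, w) → P.margin x y ≠ P.margin v w)

end Profile

/-! ## Lists, precedence, tiebreakers -/

/-- `e` precedes `f` in the list `L`. -/
def Precedes {β : Type} (L : List β) (e f : β) : Prop :=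
  ∃ l₁ l₂ l₃ : List β, L = l₁ ++ e :: (l₂ ++ f :: l₃)

/-- A tiebreaker for a profile `P`: a linear order (list) of all ordered pairs of distinct
alternatives with nonnegative margin, in which pairs with strictly larger margin come first. -/
def IsTiebreaker {ν α : Type} (P : Profile ν α) (L : List (α × α)) : Prop :=
  L.Nodup ∧
  (∀ e : α × α, e ∈ L ↔ e.1 ∈ P.alts ∧ e.2 ∈ P.alts ∧ e.1 ≠ e.2 ∧ 0 ≤ P.margin e.1 e.2) ∧
  L.Pairwise (fun e f => P.margin f.1 f.2 ≤ P.margin e.1 e.2)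

/-! ## The River method -/

open Classical in
/-- The River diagram: process the edges in the order given by `L`, adding an edge unless
it would create a directed cycle or a second incoming edge at its target. -/
noncomputable def riverDiagram {α : Type} (L : List (α × α)) : Finset (α × α) :=
  L.foldl (fun E e =>
    if (∃ f ∈ E, f.2 = e.2) ∨ Relation.ReflTransGen (fun a b => (a, b) ∈ E) e.2 e.1
    then E else insert e E) ∅

open Classical in
/-- The River winners: the sources (vertices with no incoming edge) of the River diagram. -/
noncomputable def riverWinners {ν α : Type} (P : Profile ν α) (L : List (α × α)) : Finset α :=
  P.alts.filter (fun x => ∀ f ∈ riverDiagram L, f.2 ≠ x)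

/-! ## Split Cycle -/

/-- The (cyclically) consecutive edges of a cycle given by a list of distinct vertices. -/
def cycleEdges {α : Type} (c : List α) : List (α × α) := c.zip (c.rotate 1)

/-- A majority cycle: a cycle of distinct alternatives all of whose edges have positive margin. -/
def IsMajorityCycle {ν α : Type} (P : Profile ν α) (c : List α) : Prop :=
  c.Nodup ∧ (∀ a ∈ c, a ∈ P.alts) ∧ ∀ e ∈ cycleEdges c, 0 < P.margin e.1 e.2

/-- `e` is a splitting edge of some majority cycle: it attains the minimum margin on the cycle. -/
def IsSplittingEdge {ν α : Type} (P : Profile ν α) (e : α × α) : Prop :=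
  ∃ c : List α, IsMajorityCycle P c ∧ e ∈ cycleEdges c ∧
    ∀ f ∈ cycleEdges c, P.margin e.1 e.2 ≤ P.margin f.1 f.2

open Classical in
/-- The Split Cycle winners: alternatives with no incoming edge in the Split Cycle diagram,
whose edges are the positive-margin pairs that are not splitting edges of any majority cycle. -/
noncomputable def splitCycleWinners {ν α : Type} (P : Profile ν α) : Finset α :=
  P.alts.filter (fun x => ¬ ∃ y ∈ P.alts, 0 < P.margin y x ∧ ¬ IsSplittingEdge P (y, x))

/-! ## Ranked Pairs -/

/-- A processing order for Ranked Pairs: all pairs with positive margin,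
ordered by decreasing margin. -/
def IsRPOrder {ν α : Type} (P : Profile ν α) (L : List (α × α)) : Prop :=
  L.Nodup ∧
  (∀ e : α × α, e ∈ L ↔ e.1 ∈ P.alts ∧ e.2 ∈ P.alts ∧ 0 < P.margin e.1 e.2) ∧
  L.Pairwise (fun e f => P.margin f.1 f.2 ≤ P.margin e.1 e.2)

open Classical in
/-- The Ranked Pairs diagram: add each edge in order unless it would create a directed cycle. -/
noncomputable def rpDiagram {α : Type} (L : List (α × α)) : Finset (α × α) :=
  L.foldl (fun E e =>
    if Relation.ReflTransGen (fun a b => (a, b) ∈ E) e.2 e.1 then E else insert e E) ∅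

open Classical in
/-- The Ranked Pairs winners: sources of the Ranked Pairs diagram. -/
noncomputable def rpWinners {ν α : Type} (P : Profile ν α) (L : List (α × α)) : Finset α :=
  P.alts.filter (fun x => ∀ f ∈ rpDiagram L, f.2 ≠ x)

/-! ## Beat Path -/

/-- A majority path: a sequence of distinct alternatives with positive margins along it. -/
def IsMajorityPath {ν α : Type} (P : Profile ν α) (p : List α) : Prop :=
  p.Nodup ∧ (∀ a ∈ p, a ∈ P.alts) ∧ p.Chain' (fun a b => 0 < P.margin a b)

/-- `s_P(x,y)`: the maximum strength (minimum margin along the path) of a majority path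
from `x` to `y`, and `0` if there is no such path. -/
noncomputable def beatPathStrength {ν α : Type} (P : Profile ν α) (x y : α) : ℤ :=
  sSup ({0} ∪ {s : ℤ | ∃ p : List α, IsMajorityPath P p ∧ p.head? = some x ∧
    p.getLast? = some y ∧ ((p.zip p.tail).map (fun e => P.margin e.1 e.2)).min? = some s})

open Classical in
/-- The Beat Path winners. -/
noncomputable def beatPathWinners {ν α : Type} (P : Profile ν α) : Finset α :=
  P.alts.filter (fun x => ∀ y ∈ P.alts, y ≠ x →
    beatPathStrength P y x ≤ beatPathStrength P x y)

/-! ## Stable Voting -/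

/-- Auxiliary, fuel-based definition of Stable Voting (for uniquely weighted profiles).
If only one alternative remains it wins; otherwise the winner is the alternative `x` of the
first pair `(x,y)` (ordered by decreasing margin) with `m(x,y) > 0` and `x` a Split Cycle
winner, such that `x` is a Stable Voting winner of the profile without `y`. -/
noncomputable def svAux {ν α : Type} [DecidableEq α] : ℕ → Profile ν α → Set α
  | 0, P => ↑P.alts
  | (n+1), P =>
      if P.alts.card ≤ 1 then ↑P.alts
      else {x | x ∈ P.alts ∧ ∃ y ∈ P.alts, 0 < P.margin x y ∧ x ∈ splitCycleWinners P ∧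
        x ∈ svAux n (P.restrict y) ∧
        ∀ x' ∈ P.alts, ∀ y' ∈ P.alts, 0 < P.margin x' y' → x' ∈ splitCycleWinners P →
          P.margin x y < P.margin x' y' → x' ∉ svAux n (P.restrict y')}

/-- The Stable Voting winners (for uniquely weighted profiles). -/
noncomputable def svWinners {ν α : Type} [DecidableEq α] (P : Profile ν α) : Set α :=
  svAux P.alts.card P

/-! ## Smith set, covering, quasi-Pareto domination -/

/-- A dominant set of alternatives: nonempty, and each member defeats every non-member. -/
def IsDominant {ν α : Type} (P : Profile ν α) (X : Finset α) : Prop :=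
  X.Nonempty ∧ X ⊆ P.alts ∧ ∀ x ∈ X, ∀ y ∈ P.alts, y ∉ X → 0 < P.margin x y

/-- The Smith set: the inclusion-minimal dominant set. -/
def IsSmithSet {ν α : Type} (P : Profile ν α) (S : Finset α) : Prop :=
  IsDominant P S ∧ ∀ X : Finset α, IsDominant P X → S ⊆ X

/-- `y` covers `x`: `y` defeats `x` and does at least as well against every third alternative. -/
def Covers {ν α : Type} (P : Profile ν α) (y x : α) : Prop :=
  0 < P.margin y x ∧ ∀ z ∈ P.alts, z ≠ x → z ≠ y → P.margin x z ≤ P.margin y z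

/-- `y` quasi-Pareto-dominates `x`. -/
def QuasiParetoDominates {ν α : Type} (P : Profile ν α) (y x : α) : Prop :=
  Covers P y x ∧ ∀ z ∈ P.alts, z ≠ x → z ≠ y →
    P.margin z x ≤ P.margin y x ∧ P.margin x z ≤ P.margin y x

/-! ## Tiebreaker functions -/

/-- A consistent tiebreaker function: it assigns a tiebreaker to every profile, and the relative
order of two edges not involving `x` is unchanged when `x` is removed from the profile. -/
def IsConsistentTBF {ν α : Type} [DecidableEq α] (T : Profile ν α → List (α × α)) : Prop :=
  (∀ P : Profile ν α, IsTiebreaker P (T P)) ∧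
  ∀ (P : Profile ν α) (x a b c d : α), x ∈ P.alts →
    x ≠ a → x ≠ b → x ≠ c → x ≠ d →
    (a, b) ∈ T P → (c, d) ∈ T P →
    (Precedes (T P) (a, b) (c, d) ↔ Precedes (T (P.restrict x)) (a, b) (c, d))

/-- A Pareto-consistent tiebreaker function: consistent, and whenever `y` Pareto-dominates `x`,
the edge `(y,z)` precedes the edge `(x,z)` for every third alternative `z`. -/
def IsParetoConsistentTBF {ν α : Type} [DecidableEq α]
    (T : Profile ν α → List (α × α)) : Prop :=
  IsConsistentTBF T ∧
  ∀ (P : Profile ν α) (x y z : α), P.ParetoDominates y x →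
    z ≠ x → z ≠ y → (y, z) ∈ T P → (x, z) ∈ T P → Precedes (T P) (y, z) (x, z)

/-- A quasi-Pareto-consistent tiebreaker function. -/
def IsQuasiParetoConsistentTBF {ν α : Type} [DecidableEq α]
    (T : Profile ν α → List (α × α)) : Prop :=
  IsParetoConsistentTBF T ∧
  (∀ (P : Profile ν α) (x y y' : α),
      P.margin y x = P.margin y' x → QuasiParetoDominates P y x →
      ¬ QuasiParetoDominates P y' x →
      (y, x) ∈ T P → (y', x) ∈ T P → Precedes (T P) (y, x) (y', x)) ∧
  (∀ (P : Profile ν α) (x y z : α), QuasiParetoDominates P y x →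
      ((x, z) ∈ T P → (y, z) ∈ T P → Precedes (T P) (y, z) (x, z)) ∧
      ((x, z) ∈ T P → (y, x) ∈ T P → Precedes (T P) (y, x) (x, z)))

/-- A tiebreaker for `P` induced by the fixed tie-breaking order `r` on pairs:
edges are ordered by decreasing margin, ties in margin broken according to `r`. -/
def IsTiebreakerVia {ν α : Type} (r : α × α → α × α → Prop) (P : Profile ν α)
    (L : List (α × α)) : Prop :=
  IsTiebreaker P L ∧ ∀ e f : α × α, Precedes L e f →
    P.margin f.1 f.2 < P.margin e.1 e.2 ∨ (P.margin e.1 e.2 = P.margin f.1 f.2 ∧ r e f)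

/-! The River diagram is a branching (acyclic, every vertex with at most one incoming edge)
built from pairs of the tiebreaker, and every pair of the tiebreaker is either in it or was
rejected. Of two distinct alternatives `x`, `y` one of `(x, y)`, `(y, x)` has nonnegative
margin, say `(x, y)`; it was added (an edge into `y`), or rejected because `y` already had
an incoming edge or because of a path from `y` to `x`, whose last edge enters `x`. So at most
one alternative is a source. Following incoming edges backwards from any alternative ends at a
source since the diagram is finite and acyclic, so there is exactly one, and then `Prod.snd`
maps the edges bijectively onto the other alternatives. -/

namespace River

open Relation Classical

variable {α : Type}

-- An `abbrev`, so that the `if` in `step` finds the same `Decidable` instance as `riverDiagram`.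
abbrev Rejects (E : Finset (α × α)) (e : α × α) : Prop :=
  (∃ f ∈ E, f.2 = e.2) ∨ ReflTransGen (fun a b => (a, b) ∈ E) e.2 e.1

noncomputable def step (E : Finset (α × α)) (e : α × α) : Finset (α × α) :=
  if Rejects E e then E else insert e E

theorem step_of_rejects {E : Finset (α × α)} {e : α × α} (h : Rejects E e) : step E e = E :=
  if_pos h

theorem step_of_not_rejects {E : Finset (α × α)} {e : α × α} (h : ¬ Rejects E e) :
    step E e = insert e E :=
  if_neg h

theorem riverDiagram_eq_foldl (L : List (α × α)) : riverDiagram L = L.foldl step ∅ := rfl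

/-- A directed forest whose trees are oriented away from their roots. -/
def IsBranching (E : Finset (α × α)) : Prop :=
  (∀ e ∈ E, ¬ ReflTransGen (fun a b => (a, b) ∈ E) e.2 e.1) ∧
  (∀ e ∈ E, ∀ f ∈ E, e.2 = f.2 → e = f)

def IsSource (E : Finset (α × α)) (x : α) : Prop :=
  ∀ f ∈ E, f.2 ≠ x

theorem Rejects.mono {E E' : Finset (α × α)} (h : E ⊆ E') {e : α × α} (hE : Rejects E e) :
    Rejects E' e := by
  rcases hE with ⟨f, hf, hf2⟩ | hpath
  · exact Or.inl ⟨f, h hf, hf2⟩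
  · exact Or.inr (ReflTransGen.mono (fun a b hab => h hab) _ _ hpath)

theorem subset_foldl_step (l : List (α × α)) (E : Finset (α × α)) : E ⊆ l.foldl step E := by
  induction l generalizing E with
  | nil => exact subset_rfl
  | cons e l ih =>
    refine subset_trans ?_ (ih (step E e))
    by_cases he : Rejects E e
    · rw [step_of_rejects he]
    · rw [step_of_not_rejects he]
      exact Finset.subset_insert e E

theorem mem_of_mem_foldl_step {l : List (α × α)} {E : Finset (α × α)} {f : α × α}
    (hf : f ∈ l.foldl step E) : f ∈ E ∨ f ∈ l := by
  induction l generalizing E with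
  | nil => exact Or.inl hf
  | cons e l ih =>
    rcases ih hf with hf | hf
    · by_cases he : Rejects E e
      · rw [step_of_rejects he] at hf
        exact Or.inl hf
      · rw [step_of_not_rejects he] at hf
        rcases Finset.mem_insert.1 hf with rfl | hf
        exacts [Or.inr List.mem_cons_self, Or.inl hf]
    · exact Or.inr (List.mem_cons_of_mem e hf)

theorem mem_foldl_step_or_rejects {l : List (α × α)} {e : α × α} (he : e ∈ l)
    (E : Finset (α × α)) : e ∈ l.foldl step E ∨ Rejects (l.foldl step E) e := by
  induction l generalizing E with
  | nil => cases he
  | cons e' l ih =>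
    rcases List.mem_cons.1 he with rfl | he
    · rw [List.foldl_cons]
      by_cases hrej : Rejects E e
      · rw [step_of_rejects hrej]
        exact Or.inr (hrej.mono (subset_foldl_step l E))
      · rw [step_of_not_rejects hrej]
        exact Or.inl (subset_foldl_step l _ (Finset.mem_insert_self e E))
    · exact ih he (step E e')

theorem reflTransGen_insert {E : Finset (α × α)} {e : α × α} {a b : α}
    (h : ReflTransGen (fun x y => (x, y) ∈ insert e E) a b) :
    ReflTransGen (fun x y => (x, y) ∈ E) a b ∨
      ReflTransGen (fun x y => (x, y) ∈ E) a e.1 ∧ ReflTransGen (fun x y => (x, y) ∈ E) e.2 b := by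
  induction h using ReflTransGen.head_induction_on with
  | refl => exact Or.inl ReflTransGen.refl
  | head hac _ ih =>
    rcases Finset.mem_insert.1 hac with rfl | hac
    · rcases ih with ih | ⟨_, ih⟩
      exacts [Or.inr ⟨ReflTransGen.refl, ih⟩, Or.inr ⟨ReflTransGen.refl, ih⟩]
    · rcases ih with ih | ⟨ih₁, ih₂⟩
      exacts [Or.inl (ih.head hac), Or.inr ⟨ih₁.head hac, ih₂⟩]

theorem IsBranching.insert {E : Finset (α × α)} (hE : IsBranching E) {e : α × α}
    (he : ¬ Rejects E e) : IsBranching (insert e E) := by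
  obtain ⟨hparent, hcycle⟩ := not_or.1 he
  refine ⟨fun f hf hpath => ?_, fun f hf g hg hfg => ?_⟩
  · rcases reflTransGen_insert hpath with hpathE | ⟨hpath₁, hpath₂⟩
    · rcases Finset.mem_insert.1 hf with rfl | hf
      exacts [hcycle hpathE, hE.1 f hf hpathE]
    · rcases Finset.mem_insert.1 hf with rfl | hf
      exacts [hcycle hpath₁, hcycle ((hpath₂.tail hf).trans hpath₁)]
  · rcases Finset.mem_insert.1 hf with rfl | hfE <;> rcases Finset.mem_insert.1 hg with rfl | hgE
    · rfl
    · exact absurd ⟨g, hgE, hfg.symm⟩ hparent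
    · exact absurd ⟨f, hfE, hfg⟩ hparent
    · exact hE.2 f hfE g hgE hfg

theorem IsBranching.foldl_step {E : Finset (α × α)} (hE : IsBranching E) (l : List (α × α)) :
    IsBranching (l.foldl step E) := by
  induction l generalizing E with
  | nil => exact hE
  | cons e l ih =>
    refine ih ?_
    by_cases he : Rejects E e
    · rwa [step_of_rejects he]
    · rw [step_of_not_rejects he]
      exact hE.insert he

theorem isBranching_riverDiagram (L : List (α × α)) : IsBranching (riverDiagram L) := by
  rw [riverDiagram_eq_foldl]
  exact IsBranching.foldl_step ⟨by simp, by simp⟩ L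

theorem IsBranching.not_transGen_self {E : Finset (α × α)} (hE : IsBranching E) (a : α) :
    ¬ TransGen (fun x y => (x, y) ∈ E) a a := by
  intro h
  obtain ⟨b, hab, hba⟩ := TransGen.tail'_iff.1 h
  exact hE.1 (b, a) hba hab

/-- The set of strict ancestors shrinks along each edge. -/
theorem IsBranching.wellFounded {E : Finset (α × α)} (hE : IsBranching E) :
    WellFounded (fun x y => (x, y) ∈ E) := by
  let ancestors : α → Finset α := fun v =>
    (E.image Prod.fst).filter fun b => TransGen (fun x y => (x, y) ∈ E) b v
  refine (measure fun v => (ancestors v).card).wf.mono fun a b hab => ?_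
  refine Finset.card_lt_card (Finset.ssubset_iff_of_subset ?_ |>.2 ⟨a, ?_, ?_⟩)
  · intro c hc
    simp only [ancestors, Finset.mem_filter] at hc ⊢
    exact ⟨hc.1, hc.2.tail hab⟩
  · exact Finset.mem_filter.2 ⟨Finset.mem_image_of_mem Prod.fst hab, TransGen.single hab⟩
  · exact fun ha => hE.not_transGen_self a (Finset.mem_filter.1 ha).2

theorem IsBranching.exists_source_reflTransGen {E : Finset (α × α)} (hE : IsBranching E)
    (a : α) : ∃ b, ReflTransGen (fun x y => (x, y) ∈ E) b a ∧ IsSource E b := by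
  obtain ⟨b, hba, hmin⟩ := hE.wellFounded.has_min {b | ReflTransGen _ b a} ⟨a, .refl⟩
  refine ⟨b, hba, fun f hf hfb => ?_⟩
  subst hfb
  exact hmin f.1 (ReflTransGen.head hf hba) hf

/-- Every vertex other than the source `r` has exactly one parent. -/
theorem IsBranching.card_eq {E : Finset (α × α)} (hE : IsBranching E)
    {V : Finset α} (hEV : ∀ f ∈ E, f.1 ∈ V ∧ f.2 ∈ V) {r : α} (hr : r ∈ V)
    (hsource : ∀ x ∈ V, IsSource E x ↔ x = r) : E.card = V.card - 1 := by
  have himage : E.image Prod.snd = V.erase r := by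
    ext x
    simp only [Finset.mem_image, Finset.mem_erase]
    constructor
    · rintro ⟨f, hf, rfl⟩
      exact ⟨(hsource r hr).2 rfl f hf, (hEV f hf).2⟩
    · rintro ⟨hxr, hx⟩
      by_contra hparent
      exact hxr ((hsource x hx).1 fun f hf hfx => hparent ⟨f, hf, hfx⟩)
  rw [← Finset.card_erase_of_mem hr, ← himage,
    Finset.card_image_of_injOn fun e he f hf => hE.2 e he f hf]

end River

namespace Profile

variable {ν α : Type}

theorem margin_swap (P : Profile ν α) (x y : α) : P.margin y x = - P.margin x y := by
  unfold margin
  ring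

end Profile

namespace IsTiebreaker

open River

variable {ν α : Type} {P : Profile ν α} {L : List (α × α)}

theorem mem_or_swap_mem (hL : IsTiebreaker P L) {x y : α} (hx : x ∈ P.alts) (hy : y ∈ P.alts)
    (hxy : x ≠ y) : (x, y) ∈ L ∨ (y, x) ∈ L := by
  rcases le_total 0 (P.margin x y) with h | h
  · exact Or.inl ((hL.2.1 _).2 ⟨hx, hy, hxy, h⟩)
  · refine Or.inr ((hL.2.1 _).2 ⟨hy, hx, hxy.symm, ?_⟩)
    show 0 ≤ P.margin y x
    rw [P.margin_swap]
    omega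

theorem mem_alts_of_mem_riverDiagram (hL : IsTiebreaker P L) {f : α × α}
    (hf : f ∈ riverDiagram L) : f.1 ∈ P.alts ∧ f.2 ∈ P.alts := by
  rw [riverDiagram_eq_foldl] at hf
  rcases mem_of_mem_foldl_step hf with hf | hf
  · exact absurd hf (Finset.notMem_empty f)
  · obtain ⟨h₁, h₂, -⟩ := (hL.2.1 f).1 hf
    exact ⟨h₁, h₂⟩

end IsTiebreaker

namespace River

variable {α : Type}

theorem not_isSource_of_mem {L : List (α × α)} {x y : α} (hxyL : (x, y) ∈ L) (hxy : x ≠ y)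
    (hx : IsSource (riverDiagram L) x) : ¬ IsSource (riverDiagram L) y := by
  intro hy
  rw [riverDiagram_eq_foldl] at hx hy
  rcases mem_foldl_step_or_rejects hxyL ∅ with hin | ⟨f, hf, hfy⟩ | hpath
  · exact hy _ hin rfl
  · exact hy f hf hfy
  · rcases hpath.cases_tail with hxy' | ⟨c, -, hcx⟩
    exacts [hxy hxy', hx _ hcx rfl]

theorem eq_of_isSource_riverDiagram {ν : Type} {P : Profile ν α} {L : List (α × α)}
    (hL : IsTiebreaker P L) {x y : α} (hx : x ∈ P.alts) (hy : y ∈ P.alts)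
    (hxs : IsSource (riverDiagram L) x) (hys : IsSource (riverDiagram L) y) : x = y := by
  by_contra hxy
  rcases hL.mem_or_swap_mem hx hy hxy with h | h
  exacts [not_isSource_of_mem h hxy hxs hys, not_isSource_of_mem h (Ne.symm hxy) hys hxs]

end River

open River in
theorem river_diagram_is_tree {ν α : Type} (P : Profile ν α) (hP : P.Valid)
    (L : List (α × α)) (hL : IsTiebreaker P L) :
    (∀ e ∈ riverDiagram L,
        ¬ Relation.ReflTransGen (fun a b => (a, b) ∈ riverDiagram L) e.2 e.1) ∧
    (∀ e ∈ riverDiagram L, ∀ f ∈ riverDiagram L, e.2 = f.2 → e = f) ∧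
    (riverDiagram L).card = P.alts.card - 1 ∧
    (∃! x : α, x ∈ P.alts ∧ ∀ f ∈ riverDiagram L, f.2 ≠ x) ∧
    (∃ x : α, riverWinners P L = {x}) := by
  have hbranch := isBranching_riverDiagram L
  obtain ⟨a, ha⟩ := Finset.card_pos.1 (by have := hP.2.1; omega : 0 < P.alts.card)
  obtain ⟨r, hra, hr⟩ := hbranch.exists_source_reflTransGen a
  have hrV : r ∈ P.alts := by
    rcases hra.cases_head with rfl | ⟨c, hrc, -⟩
    exacts [ha, (hL.mem_alts_of_mem_riverDiagram hrc).1]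
  have hsource : ∀ x ∈ P.alts, IsSource (riverDiagram L) x ↔ x = r := fun x hx =>
    ⟨fun hxs => eq_of_isSource_riverDiagram hL hx hrV hxs hr, fun h => h ▸ hr⟩
  refine ⟨hbranch.1, hbranch.2,
    hbranch.card_eq (fun f hf => hL.mem_alts_of_mem_riverDiagram hf) hrV hsource,
    ⟨r, ⟨hrV, hr⟩, fun x hx => (hsource x hx.1).1 hx.2⟩, r, ?_⟩
  ext x
  simp only [riverWinners, Finset.mem_filter, Finset.mem_singleton]
  exact ⟨fun hx => (hsource x hx.1).1 hx.2, fun h => h ▸ ⟨hrV, hr⟩⟩
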